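/- arXiv:2406.16234 — 2 statements merged into one kernel-verified Lean document; each statement's English description precedes it below -/
import Mathlib

section
/- Partial inverse-probability-weighting representation of the iterated g-formula functional: fix an integer k ≥ 1, adopt the core setup, and let Y_j be integrable. Then for every m ∈ {1,…,k+1}, φ_{j,k} = E_P[ 1_{B_{m−1}} g_{m−1}^{−1} Q^{j,k,m} ]. In particular, taking m = k+1 gives the sequential inverse-probability-weighted identity φ_{j,k} = E_P[ 1_{B_k} g_k^{−1} Y_j ]. The conclusion holds for any choice of versions in the conditional-expectation recursion. -/
/-!
The weighted integrals `∫_{B m} (g m)⁻¹ * Q (m + 1) dP` do not depend on `m`. To pass from `m`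
to `m + 1`, note that `(g (m + 1))⁻¹` is `𝒲 (m + 1)`-measurable, so the tower property under
`P[|B (m + 1)]` replaces `Q (m + 2)` by `Q (m + 1)`; then for `𝒲 (m + 1)`-measurable `h`,
`∫_{B (m + 1)} h dP = ∫_{B m} h * p (m + 1) dP` because `p (m + 1)` is the conditional
probability of `B (m + 1)` given `𝒲 (m + 1)` under `P[|B m]`, and `g (m + 1) = g m * p (m + 1)`.
Positivity supplies the integrability this needs: `|Q| ≤ ε⁻¹ |Q * p|`, and `Q * p` is a
conditional expectation.
-/

open MeasureTheory ProbabilityTheory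

lemma Set.mul_indicator_one {ι M₀ : Type*} [MulZeroOneClass M₀] (s : Set ι) (f : ι → M₀) :
    f * s.indicator (fun _ => 1) = s.indicator f := by
  ext i
  by_cases hi : i ∈ s <;> simp [hi]

lemma Filter.Eventually.norm_inv_prod_le {α ι : Type*} {l : Filter α} (S : Finset ι)
    {f : ι → α → ℝ} {ε : ℝ} (hε : 0 < ε) (hf : ∀ s ∈ S, ∀ᶠ a in l, ε ≤ f s a) :
    ∀ᶠ a in l, ‖(∏ s ∈ S, f s a)⁻¹‖ ≤ (ε ^ S.card)⁻¹ := by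
  filter_upwards [(Filter.eventually_all_finset S).mpr hf] with a ha
  have hprod : ε ^ S.card ≤ ∏ s ∈ S, f s a := by
    rw [← Finset.prod_const]
    exact Finset.prod_le_prod (fun _ _ => hε.le) ha
  have hpow : 0 < ε ^ S.card := by positivity
  rw [norm_inv, Real.norm_of_nonneg (hpow.le.trans hprod)]
  exact inv_anti₀ hpow hprod

namespace MeasureTheory

variable {Ω : Type*} {W : MeasurableSpace Ω} [mΩ : MeasurableSpace Ω]

lemma setIntegral_eq_measureReal_mul_integral_cond {E : Type*} [NormedAddCommGroup E]
    [NormedSpace ℝ E] (P : Measure Ω) [IsFiniteMeasure P] (C : Set Ω) (f : Ω → E) :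
    ∫ ω in C, f ω ∂P = P.real C • ∫ ω, f ω ∂P[|C] := by
  by_cases hC : P C = 0
  · simp [Measure.restrict_eq_zero.mpr hC, measureReal_def, hC]
  · rw [ProbabilityTheory.cond, integral_smul_measure, smul_smul, ENNReal.toReal_inv,
      measureReal_def, mul_inv_cancel₀ (ENNReal.toReal_ne_zero.mpr ⟨hC, measure_ne_top P C⟩),
      one_smul]

lemma integrable_cond_iff_integrableOn {E : Type*} [NormedAddCommGroup E] {P : Measure Ω}
    [IsFiniteMeasure P] {C : Set Ω} {f : Ω → E} :
    Integrable f P[|C] ↔ IntegrableOn f C P := by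
  by_cases hC : P C = 0
  · simp [cond_eq_zero_of_meas_eq_zero hC, IntegrableOn, Measure.restrict_eq_zero.mpr hC]
  · rw [ProbabilityTheory.cond, integrable_smul_measure (by simp [measure_ne_top]) (by simp [hC])]
    rfl

lemma Integrable.mul_indicator_one_cond {P : Measure Ω} [IsFiniteMeasure P] {B C : Set Ω}
    {f : Ω → ℝ} (hf : Integrable f P[|C]) (hC : MeasurableSet C) :
    Integrable (f * C.indicator fun _ => 1) P[|B] := by
  rw [Set.mul_indicator_one]
  exact integrable_cond_iff_integrableOn.mpr
    ((integrable_cond_iff_integrableOn.mp hf).integrable_indicator hC).integrableOn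

lemma integral_mul_eq_of_ae_eq_condExp {μ : Measure Ω} [IsFiniteMeasure μ] (hW : W ≤ mΩ)
    {f g q : Ω → ℝ} (hf : StronglyMeasurable[W] f) (hfg : Integrable (f * g) μ)
    (hg : Integrable g μ) (hq : q =ᵐ[μ] μ[g|W]) :
    ∫ ω, f ω * q ω ∂μ = ∫ ω, f ω * g ω ∂μ :=
  calc ∫ ω, f ω * q ω ∂μ = ∫ ω, μ[f * g|W] ω ∂μ := by
        refine integral_congr_ae ?_
        filter_upwards [hq, condExp_mul_of_stronglyMeasurable_left hf hfg hg] with ω hqω hfgω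
        rw [hfgω, Pi.mul_apply, hqω]
    _ = ∫ ω, f ω * g ω ∂μ := integral_condExp hW

lemma setIntegral_mul_eq_of_ae_eq_condExp_cond {P : Measure Ω} [IsFiniteMeasure P]
    {C : Set Ω} (hW : W ≤ mΩ) {f g q : Ω → ℝ} (hf : StronglyMeasurable[W] f)
    (hfg : Integrable (f * g) P[|C]) (hg : Integrable g P[|C]) (hq : q =ᵐ[P[|C]] P[|C][g|W]) :
    ∫ ω in C, f ω * q ω ∂P = ∫ ω in C, f ω * g ω ∂P := by
  rw [setIntegral_eq_measureReal_mul_integral_cond, setIntegral_eq_measureReal_mul_integral_cond,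
    integral_mul_eq_of_ae_eq_condExp hW hf hfg hg hq]

lemma Integrable.of_mul_of_le_condExp {μ : Measure Ω} [IsFiniteMeasure μ] (hW : W ≤ mΩ)
    {f w q : Ω → ℝ} {ε : ℝ} (hf : StronglyMeasurable[W] f) (hfw : Integrable (f * w) μ)
    (hw : Integrable w μ) (hq : q =ᵐ[μ] μ[w|W]) (hε : 0 < ε) (hqε : ∀ᵐ ω ∂μ, ε ≤ q ω) :
    Integrable f μ := by
  have hfq : Integrable (fun ω => f ω * q ω) μ := by
    refine (integrable_condExp (m := W) (f := f * w)).congr ?_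
    filter_upwards [hq, condExp_mul_of_stronglyMeasurable_left hf hfw hw] with ω hqω hfwω
    rw [hfwω, Pi.mul_apply, hqω]
  refine (hfq.norm.const_mul ε⁻¹).mono' (hf.mono hW).aestronglyMeasurable ?_
  filter_upwards [hqε] with ω hεω
  rw [norm_mul, Real.norm_of_nonneg (hε.le.trans hεω), le_inv_mul_iff₀ hε, mul_comm]
  exact mul_le_mul_of_nonneg_left hεω (norm_nonneg _)

lemma integrable_cond_of_le_condExp_indicator {P : Measure Ω} [IsFiniteMeasure P] (hW : W ≤ mΩ)
    {B C : Set Ω} (hC : MeasurableSet C) {f p : Ω → ℝ} {ε : ℝ}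
    (hf : StronglyMeasurable[W] f) (hfC : Integrable f P[|C])
    (hp : p =ᵐ[P[|B]] P[|B][C.indicator fun _ => 1|W]) (hε : 0 < ε)
    (hpε : ∀ᵐ ω ∂P, ε ≤ p ω) : Integrable f P[|B] :=
  Integrable.of_mul_of_le_condExp hW hf (hfC.mul_indicator_one_cond hC)
    ((integrable_const 1).indicator hC) hp hε (cond_absolutelyContinuous.ae_le hpε)

lemma setIntegral_eq_setIntegral_mul_of_ae_eq_condExp_indicator {P : Measure Ω}
    [IsFiniteMeasure P] (hW : W ≤ mΩ) {B C : Set Ω} (hC : MeasurableSet C) (hCB : C ⊆ B)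
    {f p : Ω → ℝ} (hf : StronglyMeasurable[W] f) (hfC : Integrable f P[|C])
    (hp : p =ᵐ[P[|B]] P[|B][C.indicator fun _ => 1|W]) :
    ∫ ω in C, f ω ∂P = ∫ ω in B, f ω * p ω ∂P := by
  rw [setIntegral_mul_eq_of_ae_eq_condExp_cond hW hf (hfC.mul_indicator_one_cond hC)
    ((integrable_const 1).indicator hC) hp]
  change _ = ∫ ω in B, (f * C.indicator fun _ => 1 : Ω → ℝ) ω ∂P
  rw [Set.mul_indicator_one, setIntegral_indicator hC, Set.inter_eq_self_of_subset_right hCB]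

lemma setIntegral_inv_mul_eq_of_condExp_cond {P : Measure Ω} [IsFiniteMeasure P] (hW : W ≤ mΩ)
    {B C : Set Ω} (hC : MeasurableSet C) (hCB : C ⊆ B) {G G' p Q Q' : Ω → ℝ} {c : ℝ}
    (hG' : G' = G * p) (hG'meas : Measurable[W] G') (hG'bdd : ∀ᵐ ω ∂P, ‖(G' ω)⁻¹‖ ≤ c)
    (hp : p =ᵐ[P[|B]] P[|B][C.indicator fun _ => 1|W]) (hp0 : ∀ᵐ ω ∂P, p ω ≠ 0)
    (hQmeas : Measurable[W] Q) (hQ : Q =ᵐ[P[|C]] P[|C][Q'|W]) (hQ' : Integrable Q' P[|C]) :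
    ∫ ω in C, (G' ω)⁻¹ * Q' ω ∂P = ∫ ω in B, (G ω)⁻¹ * Q ω ∂P := by
  have hG'inv : StronglyMeasurable[W] fun ω => (G' ω)⁻¹ := hG'meas.inv.stronglyMeasurable
  have hG'inv_ae : AEStronglyMeasurable (fun ω => (G' ω)⁻¹) P[|C] :=
    (hG'inv.mono hW).aestronglyMeasurable
  have hG'bdd_C := (cond_absolutelyContinuous (s := C)).ae_le hG'bdd
  have hQ_C : Integrable Q P[|C] := integrable_condExp.congr hQ.symm
  calc ∫ ω in C, (G' ω)⁻¹ * Q' ω ∂P = ∫ ω in C, (G' ω)⁻¹ * Q ω ∂P :=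
        (setIntegral_mul_eq_of_ae_eq_condExp_cond hW hG'inv (hQ'.bdd_mul hG'inv_ae hG'bdd_C)
          hQ' hQ).symm
    _ = ∫ ω in B, (G' ω)⁻¹ * Q ω * p ω ∂P :=
        setIntegral_eq_setIntegral_mul_of_ae_eq_condExp_indicator hW hC hCB
          (hG'inv.mul hQmeas.stronglyMeasurable) (hQ_C.bdd_mul hG'inv_ae hG'bdd_C) hp
    _ = ∫ ω in B, (G ω)⁻¹ * Q ω ∂P := by
        refine integral_congr_ae (ae_restrict_of_ae ?_)
        filter_upwards [hp0] with ω hpω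
        rw [hG', Pi.mul_apply, mul_inv]
        field_simp

end MeasureTheory

theorem partial_ipw_representation_general
    {Ω : Type*} [inst : MeasurableSpace Ω] (P : Measure Ω) [IsProbabilityMeasure P]
    (k : ℕ)
    (B : ℕ → Set Ω)
    (hBmeas : ∀ m, m ≤ k → MeasurableSet (B m))
    (hBmono : ∀ m, m < k → B (m + 1) ⊆ B m)
    (hB0 : P (B 0) = 1)
    (𝒲 : ℕ → MeasurableSpace Ω)
    (h𝒲le : ∀ m, 1 ≤ m → m ≤ k → 𝒲 m ≤ inst)
    (h𝒲mono : ∀ m, 1 ≤ m → m < k → 𝒲 m ≤ 𝒲 (m + 1))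
    (ε : ℝ) (hε : 0 < ε)
    (p : ℕ → Ω → ℝ)
    (hpmeas : ∀ m, 1 ≤ m → m ≤ k → Measurable[𝒲 m] (p m))
    (hpver : ∀ m, 1 ≤ m → m ≤ k →
      p m =ᵐ[P[|B (m - 1)]] (P[|B (m - 1)])[(B m).indicator (fun _ => (1 : ℝ))|𝒲 m])
    (hppos : ∀ m, 1 ≤ m → m ≤ k → ∀ᵐ ω ∂P, ε ≤ p m ω)
    (g : ℕ → Ω → ℝ)
    (hg : ∀ m ω, g m ω = ∏ s ∈ Finset.Icc 1 m, p s ω)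
    (Y : Ω → ℝ) (hYint : Integrable Y P)
    (Q : ℕ → Ω → ℝ)
    (hQtop : Q (k + 1) = Y)
    (hQmeas : ∀ m, 1 ≤ m → m ≤ k → Measurable[𝒲 m] (Q m))
    (hQver : ∀ m, 1 ≤ m → m ≤ k → Q m =ᵐ[P[|B m]] (P[|B m])[Q (m + 1)|𝒲 m])
    :
    (∀ m, 1 ≤ m → m ≤ k + 1 →
      ∫ ω, Q 1 ω ∂P = ∫ ω in B (m - 1), (g (m - 1) ω)⁻¹ * Q m ω ∂P)
    ∧ ∫ ω, Q 1 ω ∂P = ∫ ω in B k, (g k ω)⁻¹ * Y ω ∂P := by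
  have h𝒲 : MonotoneOn 𝒲 (Set.Icc 1 k) := monotoneOn_of_le_succ Set.ordConnected_Icc
    fun m _ hm hm1 => h𝒲mono m hm.1 (Order.succ_le_iff.mp hm1.2)
  have hgmeas : ∀ m ≤ k, Measurable[𝒲 m] (g m) := fun m hmk => by
    rw [funext (hg m)]
    refine Finset.measurable_prod _ fun s hs => ?_
    obtain ⟨hs1, hsm⟩ := Finset.mem_Icc.mp hs
    exact (hpmeas s hs1 (hsm.trans hmk)).mono
      (h𝒲 ⟨hs1, hsm.trans hmk⟩ ⟨hs1.trans hsm, hmk⟩ hsm) le_rfl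
  have hgbdd : ∀ m ≤ k, ∀ᵐ ω ∂P, ‖(g m ω)⁻¹‖ ≤ (ε ^ m)⁻¹ := fun m hmk => by
    simpa only [hg, Nat.card_Icc, Nat.add_sub_cancel] using
      Filter.Eventually.norm_inv_prod_le (Finset.Icc 1 m) hε fun s hs =>
        hppos s (Finset.mem_Icc.mp hs).1 ((Finset.mem_Icc.mp hs).2.trans hmk)
  have hpver' : ∀ m < k,
      p (m + 1) =ᵐ[P[|B m]] P[|B m][(B (m + 1)).indicator fun _ => 1|𝒲 (m + 1)] :=
    fun m hmk => by simpa only [Nat.add_sub_cancel] using hpver (m + 1) (by omega) hmk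
  have hQint : ∀ m ≤ k, Integrable (Q (m + 1)) P[|B m] := by
    intro m hmk
    rcases hmk.lt_or_eq with hmk | rfl
    · exact integrable_cond_of_le_condExp_indicator (h𝒲le (m + 1) (by omega) hmk)
        (hBmeas (m + 1) hmk) (hQmeas (m + 1) (by omega) hmk).stronglyMeasurable
        (integrable_condExp.congr (hQver (m + 1) (by omega) hmk).symm) (hpver' m hmk) hε
        (hppos (m + 1) (by omega) hmk)
    · rw [hQtop]
      exact integrable_cond_iff_integrableOn.mpr hYint.integrableOn
  have key : ∀ m ≤ k, ∫ ω, Q 1 ω ∂P = ∫ ω in B m, (g m ω)⁻¹ * Q (m + 1) ω ∂P := by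
    intro m hmk
    induction m with
    | zero =>
      rw [Measure.restrict_eq_self_of_ae_mem
        (mem_ae_iff.mpr ((prob_compl_eq_zero_iff (hBmeas 0 hmk)).mpr hB0))]
      simp [hg]
    | succ m ih =>
      have hgsucc : g (m + 1) = g m * p (m + 1) := funext fun ω => by
        rw [Pi.mul_apply, hg, hg, Finset.prod_Icc_succ_top (by omega)]
      rw [ih (by omega)]
      exact (setIntegral_inv_mul_eq_of_condExp_cond (h𝒲le (m + 1) (by omega) hmk)
        (hBmeas (m + 1) hmk) (hBmono m hmk) hgsucc (hgmeas (m + 1) hmk) (hgbdd (m + 1) hmk)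
        (hpver' m hmk)
        (by filter_upwards [hppos (m + 1) (by omega) hmk] with ω h using (hε.trans_le h).ne')
        (hQmeas (m + 1) (by omega) hmk) (hQver (m + 1) (by omega) hmk) (hQint (m + 1) hmk)).symm
  refine ⟨fun m h1 h2 => ?_, by simpa [hQtop] using key k le_rfl⟩
  obtain ⟨m, rfl⟩ := Nat.exists_eq_add_of_le' h1
  simpa using key m (by omega)

/-- Partial inverse-probability-weighting representation of the iterated
g-formula functional: under the core setup, for integrable `Y = Y_j` and any choice of
versions `Q m` in the conditional-expectation recursion, for every `1 ≤ m ≤ k + 1`,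
`φ_{j,k} = E_P[Q 1] = E_P[1_{B (m-1)} (g (m-1))⁻¹ Q m]`; in particular (taking
`m = k + 1`) the sequential IPW identity `φ_{j,k} = E_P[1_{B k} (g k)⁻¹ Y]` holds. -/
theorem partial_ipw_representation
    {Ω : Type*} [inst : MeasurableSpace Ω] (P : Measure Ω) [IsProbabilityMeasure P]
    (k : ℕ) (hk : 1 ≤ k)
    (B : ℕ → Set Ω)
    (hBmeas : ∀ m, m ≤ k → MeasurableSet (B m))
    (hBmono : ∀ m, m < k → B (m + 1) ⊆ B m)
    (hB0 : P (B 0) = 1)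
    (hBk : 0 < P (B k))
    (𝒲 : ℕ → MeasurableSpace Ω)
    (h𝒲le : ∀ m, 1 ≤ m → m ≤ k → 𝒲 m ≤ inst)
    (h𝒲mono : ∀ m, 1 ≤ m → m < k → 𝒲 m ≤ 𝒲 (m + 1))
    (ε : ℝ) (hε : 0 < ε)
    (p : ℕ → Ω → ℝ)
    (hpmeas : ∀ m, 1 ≤ m → m ≤ k → Measurable[𝒲 m] (p m))
    (hpver : ∀ m, 1 ≤ m → m ≤ k →
      p m =ᵐ[P[|B (m - 1)]] (P[|B (m - 1)])[(B m).indicator (fun _ => (1 : ℝ))|𝒲 m])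
    (hppos : ∀ m, 1 ≤ m → m ≤ k → ∀ᵐ ω ∂P, ε ≤ p m ω)
    (g : ℕ → Ω → ℝ)
    (hg : ∀ m ω, g m ω = ∏ s ∈ Finset.Icc 1 m, p s ω)
    (Y : Ω → ℝ) (hYint : Integrable Y P)
    (Q : ℕ → Ω → ℝ)
    (hQtop : Q (k + 1) = Y)
    (hQmeas : ∀ m, 1 ≤ m → m ≤ k → Measurable[𝒲 m] (Q m))
    (hQver : ∀ m, 1 ≤ m → m ≤ k → Q m =ᵐ[P[|B m]] (P[|B m])[Q (m + 1)|𝒲 m])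
    :
    (∀ m, 1 ≤ m → m ≤ k + 1 →
      ∫ ω, Q 1 ω ∂P = ∫ ω in B (m - 1), (g (m - 1) ω)⁻¹ * Q m ω ∂P)
    ∧ ∫ ω, Q 1 ω ∂P = ∫ ω in B k, (g k ω)⁻¹ * Y ω ∂P :=
  partial_ipw_representation_general (inst := inst) P k B hBmeas hBmono hB0 𝒲 h𝒲le h𝒲mono ε hε p
    hpmeas hpver hppos g hg Y hYint Q hQtop hQmeas hQver
end

section
/- Exact population expectation of the one-step (plug-in) functional: fix an integer k ≥ 1, adopt the core setup and the candidate-nuisance setup with Y_j integrable. Then E_P[ φ̃ ] = Σ_{m=1}^k E_P[ 1_{B_m} ĝ_m^{−1} (Q̄^m − Q̂^m) ] + E_P[ Q̂^1 ], where φ̃ := Σ_{m=1}^k 1_{B_m} ĝ_m^{−1}(Q̂^{m+1} − Q̂^m) + Q̂^1. -/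
open MeasureTheory ProbabilityTheory

/-!
On `B m` the weight `(ghat m)⁻¹` is a bounded `𝒲 m`-measurable function, so under `P[|B m]`
the pull-out property and the tower property let `Qhat (m + 1)` be replaced by `Qbar m` in
`(ghat m)⁻¹ * (Qhat (m + 1) - Qhat m)`. An integral over `B m` is `P (B m)` times the integral
under `P[|B m]` (both sides vanish when `P (B m) = 0`), and linearity of the integral concludes.
-/

section

variable {Ω E : Type*} {m m₀ : MeasurableSpace Ω} {μ : Measure Ω} [NormedAddCommGroup E]

theorem MeasureTheory.Integrable.cond {f : Ω → E} (hf : Integrable f μ) (s : Set Ω) :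
    Integrable f μ[|s] := by
  by_cases hs : μ s = 0
  · simp [cond_eq_zero_of_meas_eq_zero hs]
  · exact hf.restrict.smul_measure (ENNReal.inv_ne_top.mpr hs)

theorem setIntegral_eq_toReal_mul_integral_cond [NormedSpace ℝ E] [IsFiniteMeasure μ] (f : Ω → E)
    (s : Set Ω) :
    ∫ ω in s, f ω ∂μ = (μ s).toReal • ∫ ω, f ω ∂μ[|s] := by
  by_cases hs : μ s = 0
  · simp [Measure.restrict_eq_zero.mpr hs, hs]
  · rw [ProbabilityTheory.cond, integral_smul_measure, ENNReal.toReal_inv, smul_smul,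
      mul_inv_cancel₀ (ENNReal.toReal_ne_zero.mpr ⟨hs, measure_ne_top μ s⟩), one_smul]

theorem integral_mul_condExp_of_bound [IsFiniteMeasure μ] (hm : m ≤ m₀) {h X : Ω → ℝ} {c : ℝ}
    (hh : StronglyMeasurable[m] h) (hbound : ∀ᵐ ω ∂μ, ‖h ω‖ ≤ c) (hX : Integrable X μ) :
    ∫ ω, h ω * μ[X|m] ω ∂μ = ∫ ω, h ω * X ω ∂μ :=
  calc ∫ ω, h ω * μ[X|m] ω ∂μ = ∫ ω, μ[h * X|m] ω ∂μ :=
        integral_congr_ae (condExp_stronglyMeasurable_mul_of_bound hm hh hX c hbound).symm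
    _ = ∫ ω, h ω * X ω ∂μ := integral_condExp hm

theorem setIntegral_mul_sub_eq_of_ae_eq_condExp_cond [IsFiniteMeasure μ] (hm : m ≤ m₀)
    {s : Set Ω} {h X Q Qbar : Ω → ℝ} {c : ℝ}
    (hh : StronglyMeasurable[m] h) (hbound : ∀ᵐ ω ∂μ, ‖h ω‖ ≤ c) (hX : Integrable X μ)
    (hQ : StronglyMeasurable[m] Q) (hQint : Integrable Q μ) (hQbar : Qbar =ᵐ[μ[|s]] μ[|s][X|m]) :
    ∫ ω in s, h ω * (Qbar ω - Q ω) ∂μ = ∫ ω in s, h ω * (X ω - Q ω) ∂μ := by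
  by_cases hs : μ s = 0
  · simp [Measure.restrict_eq_zero.mpr hs]
  have := cond_isProbabilityMeasure (s := s) hs
  have hversion : Qbar - Q =ᵐ[μ[|s]] μ[|s][X - Q|m] := by
    filter_upwards [hQbar, condExp_sub (m := m) (hX.cond s) (hQint.cond s)] with ω hQbarω hsubω
    rw [hsubω, Pi.sub_apply, Pi.sub_apply, hQbarω,
      condExp_of_stronglyMeasurable hm hQ (hQint.cond s)]
  rw [setIntegral_eq_toReal_mul_integral_cond, setIntegral_eq_toReal_mul_integral_cond]
  congr 1
  calc ∫ ω, h ω * (Qbar ω - Q ω) ∂μ[|s] = ∫ ω, h ω * μ[|s][X - Q|m] ω ∂μ[|s] :=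
        integral_congr_ae (hversion.mono fun ω hω => by simp only [← hω, Pi.sub_apply])
    _ = ∫ ω, h ω * (X ω - Q ω) ∂μ[|s] :=
        integral_mul_condExp_of_bound hm hh (cond_absolutelyContinuous.ae_le hbound)
          ((hX.sub hQint).cond s)

theorem ae_norm_inv_prod_le_inv_pow_card {ι : Type*} {S : Finset ι} {f : ι → Ω → ℝ} {ε : ℝ}
    (hε : 0 < ε) (hf : ∀ i ∈ S, ∀ᵐ ω ∂μ, ε ≤ f i ω) :
    ∀ᵐ ω ∂μ, ‖(∏ i ∈ S, f i ω)⁻¹‖ ≤ ε⁻¹ ^ S.card := by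
  filter_upwards [(Filter.eventually_all_finset S).mpr hf] with ω hω
  have hprod : ε ^ S.card ≤ ∏ i ∈ S, f i ω := by
    simpa using Finset.prod_le_prod (fun _ _ => hε.le) hω
  rw [Real.norm_eq_abs, abs_of_pos (inv_pos.mpr ((pow_pos hε _).trans_le hprod)), inv_pow]
  exact inv_anti₀ (pow_pos hε _) hprod

theorem measurable_prod_Icc_of_monotoneOn {𝒲 : ℕ → MeasurableSpace Ω} {k m : ℕ}
    (h𝒲 : MonotoneOn 𝒲 (Set.Icc 1 k)) {f : ℕ → Ω → ℝ}
    (hf : ∀ s, 1 ≤ s → s ≤ k → Measurable[𝒲 s] (f s)) (hm : m ∈ Finset.Icc 1 k) :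
    Measurable[𝒲 m] fun ω => ∏ s ∈ Finset.Icc 1 m, f s ω := by
  obtain ⟨hm1, hmk⟩ := Finset.mem_Icc.mp hm
  refine Finset.measurable_prod _ fun s hs => ?_
  obtain ⟨hs1, hsm⟩ := Finset.mem_Icc.mp hs
  exact (hf s hs1 (hsm.trans hmk)).mono (h𝒲 ⟨hs1, hsm.trans hmk⟩ ⟨hm1, hmk⟩ hsm) le_rfl

end

theorem one_step_population_expectation_general
    {Ω : Type*} [inst : MeasurableSpace Ω] (P : Measure Ω) [IsProbabilityMeasure P]
    (k : ℕ)
    (B : ℕ → Set Ω)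
    (hBmeas : ∀ m, m ≤ k → MeasurableSet (B m))
    (𝒲 : ℕ → MeasurableSpace Ω)
    (h𝒲le : ∀ m, 1 ≤ m → m ≤ k → 𝒲 m ≤ inst)
    (h𝒲mono : ∀ m, 1 ≤ m → m < k → 𝒲 m ≤ 𝒲 (m + 1))
    (ε : ℝ) (hε : 0 < ε)
    (Y : Ω → ℝ) (hYint : Integrable Y P)
    (phat : ℕ → Ω → ℝ)
    (hphatmeas : ∀ m, 1 ≤ m → m ≤ k → Measurable[𝒲 m] (phat m))
    (hphatbd : ∀ m, 1 ≤ m → m ≤ k → ∀ᵐ ω ∂P, ε ≤ phat m ω ∧ phat m ω ≤ 1)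
    (ghat : ℕ → Ω → ℝ)
    (hghat : ∀ m ω, ghat m ω = ∏ s ∈ Finset.Icc 1 m, phat s ω)
    (Qhat : ℕ → Ω → ℝ)
    (hQhattop : Qhat (k + 1) = Y)
    (hQhatmeas : ∀ m, 1 ≤ m → m ≤ k → Measurable[𝒲 m] (Qhat m))
    (hQhatbd : ∀ m, 1 ≤ m → m ≤ k → ∃ C, ∀ ω, |Qhat m ω| ≤ C)
    (Qbar : ℕ → Ω → ℝ)
    (hQbarver : ∀ m, 1 ≤ m → m ≤ k → Qbar m =ᵐ[P[|B m]] (P[|B m])[Qhat (m + 1)|𝒲 m])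
    :
    ∫ ω, ((∑ m ∈ Finset.Icc 1 k,
        (B m).indicator (fun ω' => (ghat m ω')⁻¹ * (Qhat (m + 1) ω' - Qhat m ω')) ω)
      + Qhat 1 ω) ∂P
    = (∑ m ∈ Finset.Icc 1 k, ∫ ω in B m, (ghat m ω)⁻¹ * (Qbar m ω - Qhat m ω) ∂P)
      + ∫ ω, Qhat 1 ω ∂P := by
  have h𝒲 : MonotoneOn 𝒲 (Set.Icc 1 k) := by
    refine monotoneOn_of_le_succ Set.ordConnected_Icc fun n _ hn hsn => ?_
    rw [Order.succ_eq_add_one] at hsn ⊢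
    exact h𝒲mono n hn.1 (Nat.lt_of_succ_le hsn.2)
  have hghat_meas : ∀ m ∈ Finset.Icc 1 k, StronglyMeasurable[𝒲 m] fun ω => (ghat m ω)⁻¹ :=
    fun m hm => by
      simpa only [hghat] using
        (measurable_prod_Icc_of_monotoneOn h𝒲 hphatmeas hm).fun_inv.stronglyMeasurable
  have hghat_bound : ∀ m ∈ Finset.Icc 1 k,
      ∀ᵐ ω ∂P, ‖(ghat m ω)⁻¹‖ ≤ ε⁻¹ ^ (Finset.Icc 1 m).card := fun m hm => by
    simp only [hghat]
    refine ae_norm_inv_prod_le_inv_pow_card hε fun s hs => ?_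
    obtain ⟨hs1, hsm⟩ := Finset.mem_Icc.mp hs
    exact (hphatbd s hs1 (hsm.trans (Finset.mem_Icc.mp hm).2)).mono fun ω hω => hω.1
  have hQint : ∀ n, 1 ≤ n → n ≤ k + 1 → Integrable (Qhat n) P := by
    intro n hn1 hnk
    rcases Nat.le_succ_iff.mp hnk with hnk | rfl
    · obtain ⟨C, hC⟩ := hQhatbd n hn1 hnk
      exact .of_bound ((hQhatmeas n hn1 hnk).mono (h𝒲le n hn1 hnk) le_rfl).aestronglyMeasurable C
        (.of_forall hC)
    · rwa [hQhattop]
  have hterm_int : ∀ m ∈ Finset.Icc 1 k, Integrable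
      ((B m).indicator fun ω => (ghat m ω)⁻¹ * (Qhat (m + 1) ω - Qhat m ω)) P := by
    intro m hm
    obtain ⟨hm1, hmk⟩ := Finset.mem_Icc.mp hm
    refine Integrable.indicator ?_ (hBmeas m hmk)
    exact ((hQint (m + 1) (by omega) (by omega)).sub (hQint m hm1 (by omega))).bdd_mul
      ((hghat_meas m hm).mono (h𝒲le m hm1 hmk)).aestronglyMeasurable (hghat_bound m hm)
  rw [integral_add (integrable_finsetSum _ hterm_int) (hQint 1 le_rfl (by omega)),
    integral_finsetSum _ hterm_int]
  congr 1
  refine Finset.sum_congr rfl fun m hm => ?_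
  obtain ⟨hm1, hmk⟩ := Finset.mem_Icc.mp hm
  rw [integral_indicator (hBmeas m hmk)]
  exact (setIntegral_mul_sub_eq_of_ae_eq_condExp_cond (h𝒲le m hm1 hmk) (hghat_meas m hm)
    (hghat_bound m hm) (hQint (m + 1) (by omega) (by omega))
    (hQhatmeas m hm1 hmk).stronglyMeasurable (hQint m hm1 (by omega)) (hQbarver m hm1 hmk)).symm

/-- Exact population expectation of the one-step (plug-in) functional:
under the core setup and the candidate-nuisance setup (candidate propensities
`ε ≤ phat m ≤ 1` with cumulative products `ghat m`, bounded candidate outcome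
regressions `Qhat m` with `Qhat (k+1) = Y`, and `Qbar m` a `𝒲 m`-measurable version of
`E[Qhat (m+1) | 𝒲 m]` under `P[|B m]`),
`E_P[φ̃] = Σ_{m=1}^k E_P[1_{B m} (ghat m)⁻¹ (Qbar m - Qhat m)] + E_P[Qhat 1]`, where
`φ̃ = Σ_{m=1}^k 1_{B m} (ghat m)⁻¹ (Qhat (m+1) - Qhat m) + Qhat 1`. -/
theorem one_step_population_expectation
    {Ω : Type*} [inst : MeasurableSpace Ω] (P : Measure Ω) [IsProbabilityMeasure P]
    (k : ℕ) (hk : 1 ≤ k)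
    (B : ℕ → Set Ω)
    (hBmeas : ∀ m, m ≤ k → MeasurableSet (B m))
    (hBmono : ∀ m, m < k → B (m + 1) ⊆ B m)
    (hB0 : P (B 0) = 1)
    (hBk : 0 < P (B k))
    (𝒲 : ℕ → MeasurableSpace Ω)
    (h𝒲le : ∀ m, 1 ≤ m → m ≤ k → 𝒲 m ≤ inst)
    (h𝒲mono : ∀ m, 1 ≤ m → m < k → 𝒲 m ≤ 𝒲 (m + 1))
    (ε : ℝ) (hε : 0 < ε)
    (p : ℕ → Ω → ℝ)
    (hpmeas : ∀ m, 1 ≤ m → m ≤ k → Measurable[𝒲 m] (p m))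
    (hpver : ∀ m, 1 ≤ m → m ≤ k →
      p m =ᵐ[P[|B (m - 1)]] (P[|B (m - 1)])[(B m).indicator (fun _ => (1 : ℝ))|𝒲 m])
    (hppos : ∀ m, 1 ≤ m → m ≤ k → ∀ᵐ ω ∂P, ε ≤ p m ω)
    (g : ℕ → Ω → ℝ)
    (hg : ∀ m ω, g m ω = ∏ s ∈ Finset.Icc 1 m, p s ω)
    (Y : Ω → ℝ) (hYint : Integrable Y P)
    (phat : ℕ → Ω → ℝ)
    (hphatmeas : ∀ m, 1 ≤ m → m ≤ k → Measurable[𝒲 m] (phat m))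
    (hphatbd : ∀ m, 1 ≤ m → m ≤ k → ∀ᵐ ω ∂P, ε ≤ phat m ω ∧ phat m ω ≤ 1)
    (ghat : ℕ → Ω → ℝ)
    (hghat : ∀ m ω, ghat m ω = ∏ s ∈ Finset.Icc 1 m, phat s ω)
    (Qhat : ℕ → Ω → ℝ)
    (hQhattop : Qhat (k + 1) = Y)
    (hQhatmeas : ∀ m, 1 ≤ m → m ≤ k → Measurable[𝒲 m] (Qhat m))
    (hQhatbd : ∀ m, 1 ≤ m → m ≤ k → ∃ C, ∀ ω, |Qhat m ω| ≤ C)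
    (Qbar : ℕ → Ω → ℝ)
    (hQbarmeas : ∀ m, 1 ≤ m → m ≤ k → Measurable[𝒲 m] (Qbar m))
    (hQbarver : ∀ m, 1 ≤ m → m ≤ k → Qbar m =ᵐ[P[|B m]] (P[|B m])[Qhat (m + 1)|𝒲 m])
    :
    ∫ ω, ((∑ m ∈ Finset.Icc 1 k,
        (B m).indicator (fun ω' => (ghat m ω')⁻¹ * (Qhat (m + 1) ω' - Qhat m ω')) ω)
      + Qhat 1 ω) ∂P
    = (∑ m ∈ Finset.Icc 1 k, ∫ ω in B m, (ghat m ω)⁻¹ * (Qbar m ω - Qhat m ω) ∂P)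
      + ∫ ω, Qhat 1 ω ∂P :=
  one_step_population_expectation_general (inst := inst) P k B hBmeas 𝒲 h𝒲le h𝒲mono ε hε Y hYint
    phat hphatmeas hphatbd ghat hghat Qhat hQhattop hQhatmeas hQhatbd Qbar hQbarver
end
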